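/- arXiv:2203.06496 — 6 statements merged into one kernel-verified Lean document; each statement's English description precedes it below -/
import Mathlib

section
/- Let M be a positive integer and A a random variable taking values in [0,1] such that P(A ≤ α) ≤ α + δ for all α ∈ (0,1), for some constant δ ≥ 0. Let B be a random variable such that conditional on A, B follows a Binomial(M, A) distribution, and set R = (1+B)/(1+M). Then P(R ≤ α) ≤ α + δ for all α ∈ (0,1). -/
/-!
Given `A = a`, `P(B < m)` is the binomial lower tail, which equals the incomplete Beta integral
`m (M choose m) ∫_a^1 t^(m-1) (1-t)^(M-m) dt`. Taking expectations and swapping the integrals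
turns `P(B < m)` into `∫_0^1 P(A < t) w(t) dt`, where `w` is the Beta(m, M+1-m) density, and
`P(A < t) ≤ t + δ` bounds this by the mean `m/(M+1)` of `w` plus `δ`. With `m = ⌊α(M+1)⌋`, the
event `R ≤ α` is `B < m` and `m/(M+1) ≤ α`.
-/

open MeasureTheory Set

/-- `P(Binomial(M, a) < m)`. -/
def binomialLowerTail (M m : ℕ) (a : ℝ) : ℝ :=
  ∑ k ∈ Finset.range m, (M.choose k : ℝ) * a ^ k * (1 - a) ^ (M - k)

lemma binomialLowerTail_zero {M m : ℕ} (hm : 0 < m) : binomialLowerTail M m 0 = 1 := by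
  rw [binomialLowerTail, Finset.sum_eq_single_of_mem 0 (Finset.mem_range.2 hm)]
  · simp
  · intro k _ hk
    simp [zero_pow hk]

lemma hasDerivAt_neg_choose_mul_pow_mul_one_sub_pow (M m : ℕ) (t : ℝ) :
    HasDerivAt (fun t : ℝ => -((M.choose m : ℝ) * (t ^ m * (1 - t) ^ (M - m))))
      ((M.choose (m + 1) * (m + 1) : ℝ) * (t ^ m * (1 - t) ^ (M - (m + 1)))
        - (M.choose m * m : ℝ) * (t ^ (m - 1) * (1 - t) ^ (M - m))) t := by
  have hchoose : (M.choose (m + 1) * (m + 1) : ℝ) = M.choose m * ((M - m : ℕ) : ℝ) := by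
    exact_mod_cast Nat.choose_succ_right_eq M m
  have hexp : M - m - 1 = M - (m + 1) := by omega
  refine (((hasDerivAt_pow m t).mul (((hasDerivAt_id t).const_sub 1).pow (M - m))).const_mul
    (M.choose m : ℝ)).neg.congr_deriv ?_
  rw [hchoose, hexp]
  simp only [id, Pi.pow_apply]
  ring

theorem binomialLowerTail_eq_integral {M m : ℕ} (hm : m ≤ M) (a : ℝ) :
    binomialLowerTail M m a
      = (M.choose m * m : ℝ) * ∫ t in a..1, t ^ (m - 1) * (1 - t) ^ (M - m) := by
  induction m with
  | zero => simp [binomialLowerTail]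
  | succ m ih =>
    have hFTC := intervalIntegral.integral_eq_sub_of_hasDerivAt
      (fun t _ => hasDerivAt_neg_choose_mul_pow_mul_one_sub_pow M m t)
      (Continuous.intervalIntegrable (by fun_prop) a 1)
    rw [intervalIntegral.integral_sub (Continuous.intervalIntegrable (by fun_prop) _ _)
      (Continuous.intervalIntegrable (by fun_prop) _ _),
      intervalIntegral.integral_const_mul, intervalIntegral.integral_const_mul,
      sub_self, zero_pow (by omega)] at hFTC
    rw [binomialLowerTail, Finset.sum_range_succ, ← binomialLowerTail, ih (by omega),
      Nat.add_sub_cancel]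
    push_cast at hFTC ⊢
    linear_combination -hFTC

lemma choose_mul_integral_pow_mul_one_sub_pow {M m : ℕ} (hm : 0 < m) (hmM : m ≤ M) :
    (M.choose m * m : ℝ) * ∫ t in (0 : ℝ)..1, t ^ (m - 1) * (1 - t) ^ (M - m) = 1 := by
  rw [← binomialLowerTail_eq_integral hmM, binomialLowerTail_zero hm]

lemma choose_mul_setIntegral_add_mul_pow_mul_one_sub_pow {M m : ℕ} (hm : 0 < m) (hmM : m ≤ M)
    (δ : ℝ) :
    (M.choose m * m : ℝ) * ∫ t in Ioc (0 : ℝ) 1, (t + δ) * (t ^ (m - 1) * (1 - t) ^ (M - m))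
      = m / (M + 1) + δ := by
  -- normalisation of the Beta(m, M+1-m) and Beta(m+1, M+1-m) densities
  have hnorm := choose_mul_integral_pow_mul_one_sub_pow hm hmM
  have hmean := choose_mul_integral_pow_mul_one_sub_pow (M := M + 1) (m := m + 1) (by omega)
    (by omega)
  rw [Nat.add_sub_cancel, Nat.add_sub_add_right] at hmean
  have hchoose : ((M + 1).choose (m + 1) * (m + 1 : ℕ) : ℝ) = (M + 1) * M.choose m := by
    exact_mod_cast (Nat.add_one_mul_choose_eq M m).symm
  have hsplit (t : ℝ) : (t + δ) * (t ^ (m - 1) * (1 - t) ^ (M - m))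
      = t ^ m * (1 - t) ^ (M - m) + δ * (t ^ (m - 1) * (1 - t) ^ (M - m)) := by
    obtain ⟨j, rfl⟩ : ∃ j, m = j + 1 := ⟨m - 1, by omega⟩
    rw [Nat.add_sub_cancel]
    ring
  rw [← intervalIntegral.integral_of_le zero_le_one, intervalIntegral.integral_congr
    (fun t _ => hsplit t), intervalIntegral.integral_add (Continuous.intervalIntegrable
    (by fun_prop) _ _) (Continuous.intervalIntegrable (by fun_prop) _ _),
    intervalIntegral.integral_const_mul]
  push_cast at hmean hchoose
  rw [hchoose] at hmean
  field_simp
  linear_combination (m : ℝ) * hmean + δ * (M + 1) * hnorm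

lemma one_add_div_le_iff_lt_floor {M b : ℕ} {α : ℝ} (hα : 0 ≤ α) :
    ((1 : ℝ) + b) / (1 + M) ≤ α ↔ b < ⌊α * (1 + M)⌋₊ := by
  rw [div_le_iff₀ (by positivity), Nat.lt_iff_add_one_le, Nat.le_floor_iff (by positivity)]
  push_cast
  rw [add_comm]

section

variable {Ω : Type*} [MeasurableSpace Ω] {μ : Measure Ω} [IsFiniteMeasure μ] {A : Ω → ℝ}

lemma integrable_comp_of_mem_Icc {f : ℝ → ℝ} (hf : Continuous f) (hA : Measurable A) {a b : ℝ}
    (hAab : ∀ ω, A ω ∈ Icc a b) : Integrable (fun ω => f (A ω)) μ := by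
  obtain ⟨C, hC⟩ := isCompact_Icc.exists_bound_of_continuousOn hf.continuousOn
  exact .of_bound (hf.measurable.comp hA).aestronglyMeasurable C
    (ae_of_all _ fun ω => hC _ (hAab ω))

theorem integral_setIntegral_Ioc_eq_setIntegral_measureReal_lt_mul (hA : Measurable A) {a b : ℝ}
    (haA : ∀ ω, a ≤ A ω) {g : ℝ → ℝ} (hg : IntegrableOn g (Ioc a b)) :
    ∫ ω, (∫ t in Ioc (A ω) b, g t) ∂μ = ∫ t in Ioc a b, μ.real {ω | A ω < t} * g t := by
  set F : Ω × ℝ → ℝ := {p | A p.1 < p.2}.indicator fun p => (Ioc a b).indicator g p.2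
  have hF : Integrable F (μ.prod volume) :=
    ((hg.integrable_indicator measurableSet_Ioc).comp_snd μ).indicator
      (measurableSet_lt (hA.comp measurable_fst) measurable_snd)
  have hswap := integral_integral_swap (f := Function.curry F) hF
  have hinner_t (ω : Ω) : ∫ t : ℝ, F (ω, t) = ∫ t in Ioc (A ω) b, g t := by
    change ∫ t, (Ioi (A ω)).indicator ((Ioc a b).indicator g) t = _
    rw [integral_indicator measurableSet_Ioi, setIntegral_indicator measurableSet_Ioc,
      inter_comm, Ioc_inter_Ioi, max_eq_right (haA ω)]
  have hinner_ω (t : ℝ) :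
      ∫ ω, F (ω, t) ∂μ = (Ioc a b).indicator (fun t => μ.real {ω | A ω < t} * g t) t := by
    change ∫ ω, (A ⁻¹' Iio t).indicator (fun _ => (Ioc a b).indicator g t) ω ∂μ = _
    rw [integral_indicator_const _ (hA measurableSet_Iio), smul_eq_mul, indicator_mul_right]
    rfl
  simp only [Function.curry, hinner_t, hinner_ω] at hswap
  rw [hswap, integral_indicator measurableSet_Ioc]

theorem setIntegral_measureReal_lt_mul_le {δ : ℝ}
    (hAsub : ∀ α ∈ Ioo (0 : ℝ) 1, μ.real {ω | A ω ≤ α} ≤ α + δ) {g : ℝ → ℝ}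
    (hg0 : ∀ t ∈ Ioo (0 : ℝ) 1, 0 ≤ g t) (hgi : IntegrableOn (fun t => (t + δ) * g t) (Ioc 0 1)) :
    ∫ t in Ioc 0 1, μ.real {ω | A ω < t} * g t ≤ ∫ t in Ioc 0 1, (t + δ) * g t := by
  rw [integral_Ioc_eq_integral_Ioo, integral_Ioc_eq_integral_Ioo]
  refine integral_mono_of_nonneg ?_ (hgi.mono_set Ioo_subset_Ioc_self) ?_ <;>
    filter_upwards [ae_restrict_mem measurableSet_Ioo] with t ht
  · exact mul_nonneg measureReal_nonneg (hg0 t ht)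
  · exact mul_le_mul_of_nonneg_right
      ((measureReal_mono fun ω (hω : A ω < t) => hω.le).trans
        (hAsub t ht)) (hg0 t ht)

theorem integral_binomialLowerTail_le {δ : ℝ} (hA : Measurable A)
    (hA01 : ∀ ω, A ω ∈ Icc (0 : ℝ) 1) (hAsub : ∀ α ∈ Ioo (0 : ℝ) 1, μ.real {ω | A ω ≤ α} ≤ α + δ)
    {M m : ℕ} (hm : 0 < m) (hmM : m ≤ M) :
    ∫ ω, binomialLowerTail M m (A ω) ∂μ ≤ m / (M + 1) + δ := by
  have hg : Continuous fun t : ℝ => t ^ (m - 1) * (1 - t) ^ (M - m) := by fun_prop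
  calc ∫ ω, binomialLowerTail M m (A ω) ∂μ
      = (M.choose m * m : ℝ) * ∫ ω, (∫ t in Ioc (A ω) 1, t ^ (m - 1) * (1 - t) ^ (M - m)) ∂μ := by
        rw [← integral_const_mul]
        refine integral_congr_ae (ae_of_all _ fun ω => ?_)
        dsimp only
        rw [binomialLowerTail_eq_integral hmM, intervalIntegral.integral_of_le (hA01 ω).2]
    _ = (M.choose m * m : ℝ)
          * ∫ t in Ioc 0 1, μ.real {ω | A ω < t} * (t ^ (m - 1) * (1 - t) ^ (M - m)) := by
        rw [integral_setIntegral_Ioc_eq_setIntegral_measureReal_lt_mul hA (fun ω => (hA01 ω).1)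
          hg.integrableOn_Ioc]
    _ ≤ (M.choose m * m : ℝ) * ∫ t in Ioc 0 1, (t + δ) * (t ^ (m - 1) * (1 - t) ^ (M - m)) := by
        refine mul_le_mul_of_nonneg_left (setIntegral_measureReal_lt_mul_le hAsub (fun t ht => ?_)
          (Continuous.integrableOn_Ioc (by fun_prop))) (by positivity)
        exact mul_nonneg (pow_nonneg ht.1.le _) (pow_nonneg (sub_nonneg.2 ht.2.le) _)
    _ = m / (M + 1) + δ := choose_mul_setIntegral_add_mul_pow_mul_one_sub_pow hm hmM δ

theorem measureReal_lt_le_integral_binomialLowerTail {B : Ω → ℕ} {M : ℕ} (hA : Measurable A)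
    (hA01 : ∀ ω, A ω ∈ Icc (0 : ℝ) 1)
    (hB : ∀ k, μ.real {ω | B ω = k} = ∫ ω, (M.choose k : ℝ) * A ω ^ k * (1 - A ω) ^ (M - k) ∂μ)
    (m : ℕ) : μ.real {ω | B ω < m} ≤ ∫ ω, binomialLowerTail M m (A ω) ∂μ := by
  have hunion : {ω | B ω < m} = ⋃ k ∈ Finset.range m, {ω | B ω = k} := by
    ext ω
    simp
  calc μ.real {ω | B ω < m} ≤ ∑ k ∈ Finset.range m, μ.real {ω | B ω = k} :=
        hunion ▸ measureReal_biUnion_finset_le _ _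
    _ = ∫ ω, binomialLowerTail M m (A ω) ∂μ := by
        simp only [hB, binomialLowerTail]
        exact (integral_finsetSum _ fun k _ => integrable_comp_of_mem_Icc
          (f := fun a => (M.choose k : ℝ) * a ^ k * (1 - a) ^ (M - k)) (by fun_prop) hA hA01).symm

end

theorem stmt0_general {Ω : Type*} [MeasurableSpace Ω] (μ : Measure Ω) [IsProbabilityMeasure μ]
    (M : ℕ) (A : Ω → ℝ) (B : Ω → ℕ) (δ : ℝ)
    (hA01 : ∀ ω, A ω ∈ Set.Icc (0:ℝ) 1)
    (hAmeas : Measurable A)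
    (hAsub : ∀ α : ℝ, α ∈ Set.Ioo (0:ℝ) 1 → (μ {ω | A ω ≤ α}).toReal ≤ α + δ)
    (hcond : ∀ k : ℕ, ∀ s : Set Ω, MeasurableSet[MeasurableSpace.comap A inferInstance] s →
      (μ ({ω | B ω = k} ∩ s)).toReal
        = ∫ ω in s, (M.choose k : ℝ) * A ω ^ k * (1 - A ω) ^ (M - k) ∂μ) :
    ∀ α : ℝ, α ∈ Set.Ioo (0:ℝ) 1 →
      (μ {ω | ((1 : ℝ) + B ω) / (1 + M) ≤ α}).toReal ≤ α + δ := by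
  intro α ⟨hα0, hα1⟩
  have hB (k : ℕ) : μ.real {ω | B ω = k}
      = ∫ ω, (M.choose k : ℝ) * A ω ^ k * (1 - A ω) ^ (M - k) ∂μ := by
    simpa [measureReal_def] using hcond k univ MeasurableSet.univ
  simp only [one_add_div_le_iff_lt_floor hα0.le]
  set m := ⌊α * (1 + M)⌋₊
  rcases Nat.eq_zero_or_pos m with hm | hm
  · -- the event is empty, and `hAsub` at `α` gives `0 ≤ α + δ`
    simpa [hm] using ENNReal.toReal_nonneg.trans (hAsub α ⟨hα0, hα1⟩)
  have hmM : m ≤ M := by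
    have : m < M + 1 := (Nat.floor_lt (by positivity)).2 (by push_cast; nlinarith)
    omega
  have hmα : (m : ℝ) / (M + 1) ≤ α := by
    rw [div_le_iff₀ (by positivity), add_comm]
    exact Nat.floor_le (by positivity)
  calc μ.real {ω | B ω < m} ≤ ∫ ω, binomialLowerTail M m (A ω) ∂μ :=
        measureReal_lt_le_integral_binomialLowerTail hAmeas hA01 hB m
    _ ≤ m / (M + 1) + δ := integral_binomialLowerTail_le hAmeas hA01 hAsub hm hmM
    _ ≤ α + δ := by linarith

/-- Lemma A1: If `P(A ≤ α) ≤ α + δ` for all `α ∈ (0,1)` and, conditionally on `A`,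
`B ~ Binomial(M, A)`, then `R = (1+B)/(1+M)` satisfies `P(R ≤ α) ≤ α + δ`. -/
theorem stmt0 {Ω : Type*} [MeasurableSpace Ω] (μ : Measure Ω) [IsProbabilityMeasure μ]
    (M : ℕ) (hM : 0 < M) (A : Ω → ℝ) (B : Ω → ℕ) (δ : ℝ) (hδ : 0 ≤ δ)
    (hA01 : ∀ ω, A ω ∈ Set.Icc (0:ℝ) 1)
    (hAmeas : Measurable A) (hBmeas : Measurable B)
    (hAsub : ∀ α : ℝ, α ∈ Set.Ioo (0:ℝ) 1 → (μ {ω | A ω ≤ α}).toReal ≤ α + δ)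
    (hcond : ∀ k : ℕ, ∀ s : Set Ω, MeasurableSet[MeasurableSpace.comap A inferInstance] s →
      (μ ({ω | B ω = k} ∩ s)).toReal
        = ∫ ω in s, (M.choose k : ℝ) * A ω ^ k * (1 - A ω) ^ (M - k) ∂μ) :
    ∀ α : ℝ, α ∈ Set.Ioo (0:ℝ) 1 →
      (μ {ω | ((1 : ℝ) + B ω) / (1 + M) ≤ α}).toReal ≤ α + δ :=
  stmt0_general μ M A B δ hA01 hAmeas hAsub hcond
end

section
/- Let Y be a {0,1}-valued random variable and S, Z random variables such that S ⊥ Z | Y, and suppose there exists a ∈ ℝ with P(S ≤ a | Y = 1) ≠ P(S ≤ a | Y = 0). Then P(Y = 1 | Z) = (P(S ≤ a | Z) − P(S ≤ a | Y = 0)) / (P(S ≤ a | Y = 1) − P(S ≤ a | Y = 0)) almost surely. -/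
/-!
A function measurable for `σ(Y)` is constant on each fiber `{Y = y}`, so there the conditional
expectation given `Y` equals the elementary conditional probability, and conditional independence
of `S` and `Z` given `Y` becomes plain independence inside each fiber. Summing over the two fibers,
`P(S ≤ a, Z ∈ B) = c₀ P(Y = 0, Z ∈ B) + c₁ P(Y = 1, Z ∈ B)` for every `B`, where
`c_y = P(S ≤ a | Y = y)`; that is, `P(S ≤ a | Z) = c₀ + (c₁ - c₀) P(Y = 1 | Z)`, which can be solved
for `P(Y = 1 | Z)` because `c₁ ≠ c₀`.
-/

open MeasureTheory ProbabilityTheory Set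

lemma setIntegral_indicator_one_eq_measureReal {Ω : Type*} {mΩ : MeasurableSpace Ω}
    {μ : Measure Ω} {E s : Set Ω} (hE : MeasurableSet E) :
    ∫ x in s, E.indicator (fun _ ↦ (1 : ℝ)) x ∂μ = μ.real (E ∩ s) := by
  rw [integral_indicator_const _ hE, measureReal_restrict_apply hE, smul_eq_mul, mul_one]

section

variable {Ω β : Type*} {mΩ : MeasurableSpace Ω} {μ : Measure Ω} [IsFiniteMeasure μ]
  {mβ : MeasurableSpace β} [MeasurableSingletonClass β] {Y : Ω → β}

theorem condExp_comap_mul_measureReal_fiber (hY : Measurable Y) {f : Ω → ℝ}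
    (hf : Integrable f μ) {y : β} {ω : Ω} (hω : Y ω = y) :
    μ[f | mβ.comap Y] ω * μ.real {x | Y x = y} = ∫ x in {x | Y x = y}, f x ∂μ := by
  obtain ⟨h, -, hfac⟩ :=
    (stronglyMeasurable_condExp (f := f) (μ := μ) (m := mβ.comap Y)).exists_eq_measurable_comp
  have hfiber : MeasurableSet[mβ.comap Y] {x | Y x = y} := ⟨{y}, measurableSet_singleton y, rfl⟩
  rw [← setIntegral_condExp hY.comap_le hf hfiber,
    setIntegral_congr_fun (hY.comap_le _ hfiber)
      (fun x (hx : Y x = y) ↦ by rw [hfac, Function.comp_apply, hx]),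
    setIntegral_const, hfac, Function.comp_apply, hω, smul_eq_mul, mul_comm]

theorem ProbabilityTheory.CondIndepFun.measureReal_inter_fiber_eq_mul [StandardBorelSpace Ω]
    {γ δ : Type*} {mγ : MeasurableSpace γ} {mδ : MeasurableSpace δ} {S : Ω → γ} {Z : Ω → δ}
    (hY : Measurable Y) (hS : Measurable S) (hZ : Measurable Z)
    (hCI : CondIndepFun (mβ.comap Y) hY.comap_le S Z μ)
    {u : Set γ} {t : Set δ} (hu : MeasurableSet u) (ht : MeasurableSet t) (y : β) :
    μ.real (S ⁻¹' u ∩ Z ⁻¹' t ∩ {x | Y x = y})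
      = μ.real (S ⁻¹' u ∩ {x | Y x = y}) / μ.real {x | Y x = y}
        * μ.real (Z ⁻¹' t ∩ {x | Y x = y}) := by
  set F := {x | Y x = y}
  by_cases hF : μ F = 0
  · simp [measureReal_def, hF, measure_mono_null inter_subset_right hF]
  have hprod := (condIndepFun_iff_condExp_inter_preimage_eq_mul hS hZ).mp hCI u t hu ht
  obtain ⟨ω, hmul, hω⟩ : ∃ ω, (μ⟦S ⁻¹' u ∩ Z ⁻¹' t | mβ.comap Y⟧) ω
      = (μ⟦S ⁻¹' u | mβ.comap Y⟧) ω * (μ⟦Z ⁻¹' t | mβ.comap Y⟧) ω ∧ Y ω = y := by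
    have : (ae (μ.restrict F)).NeBot := ae_neBot.mpr (by simpa using hF)
    exact ((ae_restrict_of_ae hprod).and
      (ae_restrict_mem (s := F) (hY (measurableSet_singleton y)))).exists
  have hcond {E : Set Ω} (hE : MeasurableSet E) :
      (μ⟦E | mβ.comap Y⟧) ω * μ.real F = μ.real (E ∩ F) := by
    rw [condExp_comap_mul_measureReal_fiber hY ((integrable_const 1).indicator hE) hω,
      setIntegral_indicator_one_eq_measureReal hE]
  have hF' : μ.real F ≠ 0 := (measureReal_ne_zero_iff).mpr hF
  rw [← hcond ((hS hu).inter (hZ ht)), ← hcond (hS hu), ← hcond (hZ ht), hmul]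
  field_simp

end

section

variable {Ω : Type*} {mΩ : MeasurableSpace Ω} {μ : Measure Ω} [IsFiniteMeasure μ] {Y : Ω → ℝ}

lemma measureReal_inter_fiber_one_add_fiber_zero (hY : Measurable Y)
    (hY01 : ∀ ω, Y ω = 0 ∨ Y ω = 1) (s : Set Ω) :
    μ.real (s ∩ {ω | Y ω = 1}) + μ.real (s ∩ {ω | Y ω = 0}) = μ.real s := by
  have hdiff : s \ {ω | Y ω = 1} = s ∩ {ω | Y ω = 0} := by
    ext ω
    rcases hY01 ω with h | h <;> simp [h]
  rw [← hdiff]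
  exact measureReal_inter_add_sdiff (hY (measurableSet_singleton 1))

theorem condExp_indicator_comap_eq_of_condIndepFun [StandardBorelSpace Ω]
    {γ δ : Type*} {mγ : MeasurableSpace γ} {mδ : MeasurableSpace δ} {S : Ω → γ} {Z : Ω → δ}
    (hY : Measurable Y) (hS : Measurable S) (hZ : Measurable Z)
    (hY01 : ∀ ω, Y ω = 0 ∨ Y ω = 1)
    (hCI : CondIndepFun (MeasurableSpace.comap Y inferInstance) hY.comap_le S Z μ)
    {u : Set γ} (hu : MeasurableSet u) :
    μ⟦S ⁻¹' u | mδ.comap Z⟧ =ᵐ[μ] fun ω ↦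
      μ.real (S ⁻¹' u ∩ {ω | Y ω = 0}) / μ.real {ω | Y ω = 0}
        + (μ.real (S ⁻¹' u ∩ {ω | Y ω = 1}) / μ.real {ω | Y ω = 1}
          - μ.real (S ⁻¹' u ∩ {ω | Y ω = 0}) / μ.real {ω | Y ω = 0})
          * (μ⟦{ω | Y ω = 1} | mδ.comap Z⟧) ω := by
  set c₀ := μ.real (S ⁻¹' u ∩ {ω | Y ω = 0}) / μ.real {ω | Y ω = 0}
  set c₁ := μ.real (S ⁻¹' u ∩ {ω | Y ω = 1}) / μ.real {ω | Y ω = 1}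
  have hT₁ : MeasurableSet {ω | Y ω = 1} := hY (measurableSet_singleton 1)
  refine (ae_eq_condExp_of_forall_setIntegral_eq hZ.comap_le
    ((integrable_const 1).indicator (hS hu)) (fun s _ _ ↦ ?_) ?_ ?_).symm
  · exact ((integrable_const _).add (integrable_condExp.const_mul _)).integrableOn
  · rintro _ ⟨t, ht, rfl⟩ -
    have hfiber (y : ℝ) := hCI.measureReal_inter_fiber_eq_mul hY hS hZ hu ht y
    rw [integral_add (integrable_const _).integrableOn.integrable
        (integrable_condExp.const_mul _).integrableOn.integrable, integral_const_mul,
      setIntegral_condExp hZ.comap_le ((integrable_const 1).indicator hT₁) ⟨t, ht, rfl⟩,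
      setIntegral_indicator_one_eq_measureReal hT₁, setIntegral_const,
      setIntegral_indicator_one_eq_measureReal (hS hu),
      ← measureReal_inter_fiber_one_add_fiber_zero hY hY01 (S ⁻¹' u ∩ Z ⁻¹' t), hfiber 1,
      hfiber 0, ← measureReal_inter_fiber_one_add_fiber_zero hY hY01 (Z ⁻¹' t),
      inter_comm {ω | Y ω = 1}, smul_eq_mul]
    ring
  · exact (stronglyMeasurable_const.add
      (stronglyMeasurable_condExp.const_mul _)).aestronglyMeasurable

end

theorem stmt7_general {Ω γ : Type*} [MeasurableSpace Ω] [StandardBorelSpace Ω]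
    [MeasurableSpace γ]
    (μ : Measure Ω) [IsProbabilityMeasure μ]
    (Y S : Ω → ℝ) (Z : Ω → γ) (hY : Measurable Y) (hS : Measurable S) (hZ : Measurable Z)
    (hY01 : ∀ ω, Y ω = 0 ∨ Y ω = 1)
    (hCI : CondIndepFun (MeasurableSpace.comap Y inferInstance) hY.comap_le S Z μ)
    (a : ℝ)
    (hne : (μ ({ω | S ω ≤ a} ∩ {ω | Y ω = 1})).toReal / (μ {ω | Y ω = 1}).toReal
         ≠ (μ ({ω | S ω ≤ a} ∩ {ω | Y ω = 0})).toReal / (μ {ω | Y ω = 0}).toReal) :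
    μ[Set.indicator {ω | Y ω = 1} (fun _ => (1 : ℝ)) |
        MeasurableSpace.comap Z inferInstance]
      =ᵐ[μ] fun ω =>
        ((μ[Set.indicator {ω' | S ω' ≤ a} (fun _ => (1 : ℝ)) |
            MeasurableSpace.comap Z inferInstance]) ω
          - (μ ({ω' | S ω' ≤ a} ∩ {ω' | Y ω' = 0})).toReal / (μ {ω' | Y ω' = 0}).toReal)
        / ((μ ({ω' | S ω' ≤ a} ∩ {ω' | Y ω' = 1})).toReal / (μ {ω' | Y ω' = 1}).toReal
          - (μ ({ω' | S ω' ≤ a} ∩ {ω' | Y ω' = 0})).toReal / (μ {ω' | Y ω' = 0}).toReal) := by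
  have hcondExp := condExp_indicator_comap_eq_of_condIndepFun (mδ := inferInstance)
    hY hS hZ hY01 hCI (measurableSet_Iic (a := a))
  rw [show S ⁻¹' Iic a = {ω | S ω ≤ a} from rfl] at hcondExp
  filter_upwards [hcondExp] with ω hω
  simp only [← measureReal_def] at hne ⊢
  rw [hω, add_sub_cancel_left, mul_div_cancel_left₀ _ (sub_ne_zero.mpr hne)]

/-- If `S ⊥ Z ∣ Y` with `Y ∈ {0,1}` and `P(S ≤ a ∣ Y=1) ≠ P(S ≤ a ∣ Y=0)`, then
`P(Y = 1 ∣ Z) = (P(S ≤ a ∣ Z) − P(S ≤ a ∣ Y=0)) / (P(S ≤ a ∣ Y=1) − P(S ≤ a ∣ Y=0))` a.s. -/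
theorem stmt7 {Ω γ : Type*} [MeasurableSpace Ω] [StandardBorelSpace Ω] [Nonempty Ω]
    [MeasurableSpace γ]
    (μ : Measure Ω) [IsProbabilityMeasure μ]
    (Y S : Ω → ℝ) (Z : Ω → γ) (hY : Measurable Y) (hS : Measurable S) (hZ : Measurable Z)
    (hY01 : ∀ ω, Y ω = 0 ∨ Y ω = 1)
    (h1 : 0 < μ {ω | Y ω = 1}) (h0 : 0 < μ {ω | Y ω = 0})
    (hCI : CondIndepFun (MeasurableSpace.comap Y inferInstance) hY.comap_le S Z μ)
    (a : ℝ)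
    (hne : (μ ({ω | S ω ≤ a} ∩ {ω | Y ω = 1})).toReal / (μ {ω | Y ω = 1}).toReal
         ≠ (μ ({ω | S ω ≤ a} ∩ {ω | Y ω = 0})).toReal / (μ {ω | Y ω = 0}).toReal) :
    μ[Set.indicator {ω | Y ω = 1} (fun _ => (1 : ℝ)) |
        MeasurableSpace.comap Z inferInstance]
      =ᵐ[μ] fun ω =>
        ((μ[Set.indicator {ω' | S ω' ≤ a} (fun _ => (1 : ℝ)) |
            MeasurableSpace.comap Z inferInstance]) ω
          - (μ ({ω' | S ω' ≤ a} ∩ {ω' | Y ω' = 0})).toReal / (μ {ω' | Y ω' = 0}).toReal)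
        / ((μ ({ω' | S ω' ≤ a} ∩ {ω' | Y ω' = 1})).toReal / (μ {ω' | Y ω' = 1}).toReal
          - (μ ({ω' | S ω' ≤ a} ∩ {ω' | Y ω' = 0})).toReal / (μ {ω' | Y ω' = 0}).toReal) :=
  stmt7_general μ Y S Z hY hS hZ hY01 hCI a hne
end

section
/- Let Y ∈ {0,1}, S, Z be random variables with S ⊥ Z | Y and such that P(S ≤ a | Y=1) ≠ P(S ≤ a | Y=0) for some a. If g is a measurable function of Z with Z ⊥ S | g(Z), then Z ⊥ Y | g(Z). (A predictive surrogate satisfying the conditional-independence assumption is a perfect surrogate.) -/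
/-!
Since `Y` is `{0,1}`-valued, `P(S ≤ a | Y) = φ 0 + (φ 1 - φ 0) Y` where `φ y = P(S ≤ a | Y = y)`.
Conditioning further on `Z` and using `S ⊥ Z | Y` gives
`P(S ≤ a | Z) = φ 0 + (φ 1 - φ 0) E[Y | Z]`, while `Z ⊥ S | g(Z)` says that `P(S ≤ a | Z)` is
`g(Z)`-measurable. As `φ 1 ≠ φ 0`, so is `E[Y | Z]`, hence `E[Y | Z] = E[Y | g(Z)]`. For a binary
`Y` this means that every event of `σ(Y)` has the same conditional probability given `Z` and
given `g(Z)`, which is `Z ⊥ Y | g(Z)`.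
-/

open MeasureTheory ProbabilityTheory Set

section CondExp

variable {Ω : Type*} {m m₁ m₂ mΩ : MeasurableSpace Ω} {μ : Measure Ω} [IsFiniteMeasure μ]
  {s t : Set Ω}

lemma condExp_indicator_ae_eq_condExp_condExp_of_forall_inter (hm : m ≤ mΩ) (hm₁ : m₁ ≤ mΩ)
    (hs : MeasurableSet s)
    (h : ∀ t, MeasurableSet[m₁] t → μ⟦s ∩ t|m⟧ =ᵐ[μ] fun ω => (μ⟦s|m⟧) ω * (μ⟦t|m⟧) ω) :
    μ⟦s|m₁⟧ =ᵐ[μ] μ[μ⟦s|m⟧|m₁] := by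
  refine ae_eq_condExp_of_forall_setIntegral_eq hm₁ integrable_condExp
    (fun _ _ _ => integrable_condExp.integrableOn) (fun t ht _ => ?_)
    stronglyMeasurable_condExp.aestronglyMeasurable
  have ht' : MeasurableSet t := hm₁ t ht
  have hmul : μ⟦s|m⟧ * t.indicator (fun _ => (1 : ℝ)) = t.indicator (μ⟦s|m⟧) := by
    ext x; by_cases hx : x ∈ t <;> simp [hx]
  calc ∫ x in t, (μ⟦s|m₁⟧) x ∂μ = μ.real (s ∩ t) := by
        rw [setIntegral_condExp hm₁ ((integrable_const 1).indicator hs) ht,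
          setIntegral_indicator hs]
        simp [inter_comm]
    _ = ∫ x, (μ⟦s ∩ t|m⟧) x ∂μ := by
        rw [integral_condExp hm, integral_indicator (hs.inter ht')]
        simp
    _ = ∫ x, (μ⟦s|m⟧ * μ⟦t|m⟧) x ∂μ := integral_congr_ae (h t ht)
    _ = ∫ x, (μ[μ⟦s|m⟧ * t.indicator (fun _ => (1 : ℝ))|m]) x ∂μ :=
        integral_congr_ae (condExp_mul_of_stronglyMeasurable_left stronglyMeasurable_condExp
          (hmul ▸ integrable_condExp.indicator ht') ((integrable_const 1).indicator ht')).symm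
    _ = ∫ x in t, (μ⟦s|m⟧) x ∂μ := by
        rw [integral_condExp hm, hmul, integral_indicator ht']

lemma condExp_inter_ae_eq_mul_of_condExp_ae_eq (hm₂₁ : m₂ ≤ m₁) (hm₁ : m₁ ≤ mΩ)
    (hs : MeasurableSet s) (ht : MeasurableSet[m₁] t) (h : μ⟦s|m₁⟧ =ᵐ[μ] μ⟦s|m₂⟧) :
    μ⟦s ∩ t|m₂⟧ =ᵐ[μ] fun ω => (μ⟦s|m₂⟧) ω * (μ⟦t|m₂⟧) ω := by
  have ht' : MeasurableSet t := hm₁ t ht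
  have hmul : ∀ f : Ω → ℝ, f * t.indicator (fun _ => (1 : ℝ)) = t.indicator f := fun f => by
    ext x; by_cases hx : x ∈ t <;> simp [hx]
  calc μ⟦s ∩ t|m₂⟧ =ᵐ[μ] μ[μ⟦s ∩ t|m₁⟧|m₂] := (condExp_condExp_of_le hm₂₁ hm₁).symm
    _ =ᵐ[μ] μ[μ⟦s|m₂⟧ * t.indicator (fun _ => (1 : ℝ))|m₂] := by
        refine condExp_congr_ae ?_
        rw [hmul, inter_comm, ← indicator_indicator]
        exact (condExp_indicator ((integrable_const 1).indicator hs) ht).trans h.indicator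
    _ =ᵐ[μ] μ⟦s|m₂⟧ * μ⟦t|m₂⟧ :=
        condExp_mul_of_stronglyMeasurable_left stronglyMeasurable_condExp
          (by rw [hmul]; exact integrable_condExp.indicator ht') ((integrable_const 1).indicator ht')

lemma condExp_ae_eq_condExp_of_le_of_aestronglyMeasurable (hm₂₁ : m₂ ≤ m₁) (hm₁ : m₁ ≤ mΩ)
    {f : Ω → ℝ} (h : AEStronglyMeasurable[m₂] (μ[f|m₁]) μ) : μ[f|m₂] =ᵐ[μ] μ[f|m₁] :=
  (condExp_condExp_of_le hm₂₁ hm₁).symm.trans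
    (condExp_of_aestronglyMeasurable' (hm₂₁.trans hm₁) h integrable_condExp)

lemma condExp_ae_eq_condExp_of_condExp_ae_eq_affine (hm₂₁ : m₂ ≤ m₁) (hm₁ : m₁ ≤ mΩ)
    {f h : Ω → ℝ} {c d : ℝ} (hd : d ≠ 0) (h₁ : μ[h|m₁] =ᵐ[μ] fun ω => c + d * (μ[f|m₁]) ω)
    (h₂ : μ[h|m₁] =ᵐ[μ] μ[h|m₂]) :
    μ[f|m₁] =ᵐ[μ] μ[f|m₂] := by
  have hf : μ[f|m₁] =ᵐ[μ] fun ω => ((μ[h|m₂]) ω - c) / d := by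
    filter_upwards [h₁, h₂] with ω h₁ h₂
    rw [← h₂, h₁]
    field_simp
    ring
  refine (condExp_ae_eq_condExp_of_le_of_aestronglyMeasurable hm₂₁ hm₁ ?_).symm
  exact ((stronglyMeasurable_condExp.measurable.sub_const c).div_const d).aestronglyMeasurable.congr
    hf.symm

end CondExp

section CondIndepFun

variable {Ω β γ : Type*} {m : MeasurableSpace Ω} [mΩ : MeasurableSpace Ω] [StandardBorelSpace Ω]
  {μ : Measure Ω} [IsFiniteMeasure μ] [MeasurableSpace β] [mγ : MeasurableSpace γ]
  {X : Ω → β} {Z : Ω → γ}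

lemma CondIndepFun.condExp_preimage_ae_eq_condExp_condExp {hm : m ≤ mΩ}
    (h : CondIndepFun m hm X Z μ) (hX : Measurable X) (hZ : Measurable Z) {A : Set β}
    (hA : MeasurableSet A) :
    μ⟦X ⁻¹' A|mγ.comap Z⟧ =ᵐ[μ] μ[μ⟦X ⁻¹' A|m⟧|mγ.comap Z] := by
  refine condExp_indicator_ae_eq_condExp_condExp_of_forall_inter hm hZ.comap_le (hX hA) ?_
  rintro _ ⟨v, hv, rfl⟩
  exact (condIndepFun_iff_condExp_inter_preimage_eq_mul hX hZ).mp h A v hA hv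

lemma condIndepFun_iff_forall_condExp_preimage_ae_eq (hX : Measurable X) (hZ : Measurable Z)
    (hm : m ≤ mγ.comap Z) :
    CondIndepFun m (hm.trans hZ.comap_le) X Z μ ↔
      ∀ A, MeasurableSet A → μ⟦X ⁻¹' A|mγ.comap Z⟧ =ᵐ[μ] μ⟦X ⁻¹' A|m⟧ := by
  refine ⟨fun h A hA => ?_, fun h => ?_⟩
  · exact (CondIndepFun.condExp_preimage_ae_eq_condExp_condExp h hX hZ hA).trans
      (condExp_of_stronglyMeasurable hZ.comap_le (stronglyMeasurable_condExp.mono hm)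
        integrable_condExp).eventuallyEq
  · rw [condIndepFun_iff_condExp_inter_preimage_eq_mul hX hZ]
    intro A v hA hv
    exact condExp_inter_ae_eq_mul_of_condExp_ae_eq hm hZ.comap_le (hX hA) ⟨v, hv, rfl⟩ (h A hA)

end CondIndepFun

lemma condDistrib_real_apply_of_ne_zero {Ω β : Type*} [MeasurableSpace Ω] [StandardBorelSpace Ω]
    [Nonempty Ω] [MeasurableSpace β] [MeasurableSingletonClass β] {α : Type*} [MeasurableSpace α]
    {μ : Measure α} [IsFiniteMeasure μ] {X : α → β} {Y : α → Ω}
    (hX : Measurable X) (hY : Measurable Y) {x : β} (hx : μ (X ⁻¹' {x}) ≠ 0) {A : Set Ω}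
    (hA : MeasurableSet A) :
    (condDistrib Y X μ x).real A = μ.real (Y ⁻¹' A ∩ X ⁻¹' {x}) / μ.real (X ⁻¹' {x}) := by
  rw [measureReal_def, condDistrib_apply_of_ne_zero hY x
    (by rwa [Measure.map_apply hX (measurableSet_singleton x)]),
    Measure.map_apply hX (measurableSet_singleton x),
    Measure.map_apply (hX.prodMk hY) ((measurableSet_singleton x).prod hA),
    ENNReal.toReal_mul, ENNReal.toReal_inv, mk_preimage_prod, inter_comm, div_eq_inv_mul,
    measureReal_def, measureReal_def]

section Binary

variable {Ω : Type*} {Y : Ω → ℝ}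

lemma comp_eq_affine_of_forall_eq_zero_or_eq_one (hY01 : ∀ ω, Y ω = 0 ∨ Y ω = 1)
    (φ : ℝ → ℝ) : φ ∘ Y = fun ω => φ 0 + (φ 1 - φ 0) * Y ω := by
  ext ω
  rcases hY01 ω with h | h <;> simp [h]

variable {m m₁ m₂ : MeasurableSpace Ω} [mΩ : MeasurableSpace Ω] {μ : Measure Ω}
  [IsFiniteMeasure μ]

lemma condExp_comp_ae_eq_of_forall_eq_zero_or_eq_one (hm : m ≤ mΩ) (hY : Measurable Y)
    (hY01 : ∀ ω, Y ω = 0 ∨ Y ω = 1) (φ : ℝ → ℝ) :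
    μ[φ ∘ Y|m] =ᵐ[μ] fun ω => φ 0 + (φ 1 - φ 0) * (μ[Y|m]) ω := by
  have hYint : Integrable Y μ := by
    refine Integrable.of_bound hY.aestronglyMeasurable 1 (ae_of_all _ fun ω => ?_)
    rcases hY01 ω with h | h <;> simp [h]
  rw [comp_eq_affine_of_forall_eq_zero_or_eq_one hY01 φ]
  refine (condExp_add (integrable_const _) (hYint.const_mul _) m).trans ?_
  rw [condExp_const hm]
  filter_upwards [condExp_smul (φ 1 - φ 0) Y m] with ω hω
  simp only [Pi.add_apply, ← smul_eq_mul, ← Pi.smul_def, hω, Pi.smul_apply]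

lemma condExp_preimage_ae_eq_of_condExp_ae_eq (hm₁ : m₁ ≤ mΩ) (hm₂ : m₂ ≤ mΩ) (hY : Measurable Y) (hY01 : ∀ ω, Y ω = 0 ∨ Y ω = 1)
    (h : μ[Y|m₁] =ᵐ[μ] μ[Y|m₂]) (b : Set ℝ) : μ⟦Y ⁻¹' b|m₁⟧ =ᵐ[μ] μ⟦Y ⁻¹' b|m₂⟧ := by
  have hcomp : (Y ⁻¹' b).indicator (fun _ => (1 : ℝ)) = b.indicator (fun _ => 1) ∘ Y := rfl
  rw [hcomp]
  filter_upwards [condExp_comp_ae_eq_of_forall_eq_zero_or_eq_one hm₁ hY hY01 _,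
    condExp_comp_ae_eq_of_forall_eq_zero_or_eq_one hm₂ hY hY01 _, h] with ω h₁ h₂ hω
  rw [h₁, h₂, hω]

end Binary

theorem stmt8_general {Ω γ δ : Type*} [MeasurableSpace Ω] [StandardBorelSpace Ω]
    [MeasurableSpace γ] [MeasurableSpace δ]
    (μ : Measure Ω) [IsProbabilityMeasure μ]
    (Y S : Ω → ℝ) (Z : Ω → γ) (g : γ → δ)
    (hY : Measurable Y) (hS : Measurable S) (hZ : Measurable Z) (hg : Measurable g)
    (hY01 : ∀ ω, Y ω = 0 ∨ Y ω = 1)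
    (h1 : 0 < μ {ω | Y ω = 1}) (h0 : 0 < μ {ω | Y ω = 0})
    (hCI : CondIndepFun (MeasurableSpace.comap Y inferInstance) hY.comap_le S Z μ)
    (a : ℝ)
    (hne : (μ ({ω | S ω ≤ a} ∩ {ω | Y ω = 1})).toReal / (μ {ω | Y ω = 1}).toReal
         ≠ (μ ({ω | S ω ≤ a} ∩ {ω | Y ω = 0})).toReal / (μ {ω | Y ω = 0}).toReal)
    (hCI2 : CondIndepFun (MeasurableSpace.comap (fun ω => g (Z ω)) inferInstance)
      ((hg.comp hZ).comap_le) Z S μ) :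
    CondIndepFun (MeasurableSpace.comap (fun ω => g (Z ω)) inferInstance)
      ((hg.comp hZ).comap_le) Z Y μ := by
  have hm : MeasurableSpace.comap (fun ω => g (Z ω)) inferInstance
      ≤ MeasurableSpace.comap Z inferInstance := (hg.comp (comap_measurable Z)).comap_le
  let φ : ℝ → ℝ := fun y => (condDistrib S Y μ y).real (Iic a)
  have hφ : φ 1 ≠ φ 0 := by
    simp only [φ]
    rwa [condDistrib_real_apply_of_ne_zero hY hS h1.ne' measurableSet_Iic,
      condDistrib_real_apply_of_ne_zero hY hS h0.ne' measurableSet_Iic]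
  have hSZ : μ⟦S ⁻¹' Iic a|MeasurableSpace.comap Z inferInstance⟧ =ᵐ[μ]
      fun ω => φ 0 + (φ 1 - φ 0) * (μ[Y|MeasurableSpace.comap Z inferInstance]) ω :=
    (CondIndepFun.condExp_preimage_ae_eq_condExp_condExp hCI hS hZ measurableSet_Iic).trans
      ((condExp_congr_ae (condDistrib_ae_eq_condExp hY hS measurableSet_Iic).symm).trans
        (condExp_comp_ae_eq_of_forall_eq_zero_or_eq_one hZ.comap_le hY hY01 φ))
  have hYg := condExp_ae_eq_condExp_of_condExp_ae_eq_affine hm hZ.comap_le (sub_ne_zero.mpr hφ)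
    hSZ ((condIndepFun_iff_forall_condExp_preimage_ae_eq hS hZ hm).mp hCI2.symm _ measurableSet_Iic)
  exact ((condIndepFun_iff_forall_condExp_preimage_ae_eq hY hZ hm).mpr fun b _ =>
    condExp_preimage_ae_eq_of_condExp_ae_eq hZ.comap_le (hm.trans hZ.comap_le) hY hY01 hYg b).symm

/-- A predictive surrogate satisfying `S ⊥ Z ∣ Y` is perfect: if moreover
`Z ⊥ S ∣ g(Z)`, then `Z ⊥ Y ∣ g(Z)`. -/
theorem stmt8 {Ω γ δ : Type*} [MeasurableSpace Ω] [StandardBorelSpace Ω] [Nonempty Ω]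
    [MeasurableSpace γ] [MeasurableSpace δ]
    (μ : Measure Ω) [IsProbabilityMeasure μ]
    (Y S : Ω → ℝ) (Z : Ω → γ) (g : γ → δ)
    (hY : Measurable Y) (hS : Measurable S) (hZ : Measurable Z) (hg : Measurable g)
    (hY01 : ∀ ω, Y ω = 0 ∨ Y ω = 1)
    (h1 : 0 < μ {ω | Y ω = 1}) (h0 : 0 < μ {ω | Y ω = 0})
    (hCI : CondIndepFun (MeasurableSpace.comap Y inferInstance) hY.comap_le S Z μ)
    (a : ℝ)
    (hne : (μ ({ω | S ω ≤ a} ∩ {ω | Y ω = 1})).toReal / (μ {ω | Y ω = 1}).toReal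
         ≠ (μ ({ω | S ω ≤ a} ∩ {ω | Y ω = 0})).toReal / (μ {ω | Y ω = 0}).toReal)
    (hCI2 : CondIndepFun (MeasurableSpace.comap (fun ω => g (Z ω)) inferInstance)
      ((hg.comp hZ).comap_le) Z S μ) :
    CondIndepFun (MeasurableSpace.comap (fun ω => g (Z ω)) inferInstance)
      ((hg.comp hZ).comap_le) Z Y μ :=
  stmt8_general μ Y S Z g hY hS hZ hg hY01 h1 h0 hCI a hne hCI2
end

section
/- Suppose X ⊥ Y | Z and Y ⊥ Z | g(Z) for a measurable function g of Z. Then X ⊥ Y | (g(Z), h(Z)) for any measurable function h of Z. -/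
/-!
Conditioning on `g(Z)` or on `Z` gives the same conditional law of `Y`, because `Y ⊥ Z ∣ g(Z)`;
the same then holds for any intermediate σ-algebra such as that of `(g(Z), h(Z))`.
Hence, conditioning the factorisation `P(A ∩ B ∣ Z) = P(A ∣ Z) P(B ∣ Z)` down to `(g(Z), h(Z))`,
the factor `P(B ∣ Z) = P(B ∣ g(Z))` can be pulled out, leaving `P(A ∣ g(Z), h(Z)) P(B ∣ g(Z), h(Z))`.
-/

open MeasureTheory ProbabilityTheory

section CondIndep

variable {Ω : Type*} {m m₁ m₂ m' mΩ : MeasurableSpace Ω} {μ : Measure Ω}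

lemma ae_norm_condExp_indicator_le_one (s : Set Ω) : ∀ᵐ ω ∂μ, ‖(μ⟦s | m⟧) ω‖ ≤ 1 := by
  refine ae_bdd_abs_condExp_of_ae_bdd_abs (Filter.Eventually.of_forall fun ω => ?_)
  by_cases hω : ω ∈ s <;> simp [hω]

variable [StandardBorelSpace Ω] [IsFiniteMeasure μ]

lemma CondIndep.condExp_indicator_ae_eq_of_le (hm₂ : m₂ ≤ mΩ) (hm₁ : m₁ ≤ mΩ) (hm : m ≤ m₂)
    (hind : CondIndep m m₁ m₂ (hm.trans hm₂) μ) {t : Set Ω} (ht : MeasurableSet[m₁] t) :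
    μ⟦t | m₂⟧ =ᵐ[μ] μ⟦t | m⟧ := by
  have hmΩ := hm.trans hm₂
  rw [condIndep_iff _ _ _ _ hm₁ hm₂] at hind
  refine (ae_eq_condExp_of_forall_setIntegral_eq hm₂ ((integrable_const 1).indicator (hm₁ t ht))
    (fun _ _ _ => integrable_condExp.integrableOn) (fun u hu _ => ?_)
    (stronglyMeasurable_condExp.mono hm).aestronglyMeasurable).symm
  have hu' : MeasurableSet[mΩ] u := hm₂ u hu
  have h_indicator_mul : u.indicator (fun _ => (1 : ℝ)) * μ⟦t | m⟧ = u.indicator (μ⟦t | m⟧) := by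
    ext ω; by_cases hω : ω ∈ u <;> simp [hω]
  calc ∫ ω in u, (μ⟦t | m⟧) ω ∂μ
      = ∫ ω, (μ[u.indicator (fun _ => (1 : ℝ)) * μ⟦t | m⟧ | m]) ω ∂μ := by
        rw [integral_condExp hmΩ, h_indicator_mul, integral_indicator hu']
    _ = ∫ ω, (μ⟦u | m⟧ * μ⟦t | m⟧) ω ∂μ := by
        refine integral_congr_ae (condExp_mul_of_stronglyMeasurable_right stronglyMeasurable_condExp
          ?_ ((integrable_const 1).indicator hu'))
        rw [h_indicator_mul]
        exact integrable_condExp.indicator hu'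
    _ = ∫ ω, (μ⟦t ∩ u | m⟧) ω ∂μ := by
        refine integral_congr_ae ?_
        filter_upwards [hind t u ht hu] with ω hω
        rw [hω, Pi.mul_apply, Pi.mul_apply, mul_comm]
    _ = ∫ ω in u, t.indicator (fun _ => (1 : ℝ)) ω ∂μ := by
        rw [integral_condExp hmΩ, ← integral_indicator hu', Set.indicator_indicator, Set.inter_comm]

lemma CondIndep.of_condIndep_of_le_of_le {mZ : MeasurableSpace Ω} (hmZ : mZ ≤ mΩ)
    (hm₁ : m₁ ≤ mΩ) (hm₂ : m₂ ≤ mΩ) (hm : m ≤ m') (hm' : m' ≤ mZ)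
    (h₁₂ : CondIndep mZ m₁ m₂ hmZ μ) (h₂Z : CondIndep m m₂ mZ ((hm.trans hm').trans hmZ) μ) :
    CondIndep m' m₁ m₂ (hm'.trans hmZ) μ := by
  have hm'Ω := hm'.trans hmZ
  rw [condIndep_iff _ _ _ _ hm₁ hm₂] at h₁₂ ⊢
  intro t₁ t₂ ht₁ ht₂
  have hY_Z : μ⟦t₂ | mZ⟧ =ᵐ[μ] μ⟦t₂ | m⟧ :=
    CondIndep.condExp_indicator_ae_eq_of_le hmZ hm₂ (hm.trans hm') h₂Z ht₂
  have hY_m' : μ⟦t₂ | m'⟧ =ᵐ[μ] μ⟦t₂ | m⟧ :=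
    CondIndep.condExp_indicator_ae_eq_of_le hm'Ω hm₂ hm
      (condIndep_of_condIndep_of_le_right h₂Z hm') ht₂
  calc μ⟦t₁ ∩ t₂ | m'⟧
      =ᵐ[μ] μ[μ⟦t₁ ∩ t₂ | mZ⟧ | m'] := (condExp_condExp_of_le hm' hmZ).symm
    _ =ᵐ[μ] μ[μ⟦t₂ | m⟧ * μ⟦t₁ | mZ⟧ | m'] := by
        refine condExp_congr_ae ?_
        filter_upwards [h₁₂ t₁ t₂ ht₁ ht₂, hY_Z] with ω h₁₂ω hY_Zω
        rw [h₁₂ω, Pi.mul_apply, Pi.mul_apply, hY_Zω, mul_comm]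
    _ =ᵐ[μ] μ⟦t₂ | m⟧ * μ[μ⟦t₁ | mZ⟧ | m'] :=
        condExp_stronglyMeasurable_mul_of_bound hm'Ω (stronglyMeasurable_condExp.mono hm)
          integrable_condExp 1 (ae_norm_condExp_indicator_le_one t₂)
    _ =ᵐ[μ] μ⟦t₁ | m'⟧ * μ⟦t₂ | m'⟧ := by
        filter_upwards [condExp_condExp_of_le (f := t₁.indicator fun _ => (1 : ℝ)) (μ := μ) hm' hmZ,
          hY_m'] with ω h₁ω h₂ω
        rw [Pi.mul_apply, Pi.mul_apply, h₁ω, h₂ω, mul_comm]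

end CondIndep

theorem stmt9_general {Ω α β γ δ ε : Type*} [MeasurableSpace Ω] [StandardBorelSpace Ω]
    [MeasurableSpace α] [MeasurableSpace β] [MeasurableSpace γ]
    [MeasurableSpace δ] [MeasurableSpace ε]
    (μ : Measure Ω) [IsProbabilityMeasure μ]
    (X : Ω → α) (Y : Ω → β) (Z : Ω → γ) (g : γ → δ) (h : γ → ε)
    (hX : Measurable X) (hY : Measurable Y) (hZ : Measurable Z)
    (hg : Measurable g) (hh : Measurable h)
    (hXY : CondIndepFun (MeasurableSpace.comap Z inferInstance) hZ.comap_le X Y μ)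
    (hYZ : CondIndepFun (MeasurableSpace.comap (fun ω => g (Z ω)) inferInstance)
      ((hg.comp hZ).comap_le) Y Z μ) :
    CondIndepFun (MeasurableSpace.comap (fun ω => (g (Z ω), h (Z ω))) inferInstance)
      (((hg.comp hZ).prodMk (hh.comp hZ)).comap_le) X Y μ := by
  have hg_le : MeasurableSpace.comap (fun ω => g (Z ω)) inferInstance ≤
      MeasurableSpace.comap (fun ω => (g (Z ω), h (Z ω))) inferInstance :=
    MeasurableSpace.comap_le_comap_of_eq_comp Prod.fst measurable_fst rfl
  have hgh_le : MeasurableSpace.comap (fun ω => (g (Z ω), h (Z ω))) inferInstance ≤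
      MeasurableSpace.comap Z inferInstance :=
    MeasurableSpace.comap_le_comap_of_eq_comp _ (hg.prodMk hh) rfl
  rw [condIndepFun_iff_condIndep] at hXY hYZ ⊢
  exact CondIndep.of_condIndep_of_le_of_le hZ.comap_le hX.comap_le hY.comap_le hg_le hgh_le hXY hYZ

/-- If `X ⊥ Y ∣ Z` and `Y ⊥ Z ∣ g(Z)`, then `X ⊥ Y ∣ (g(Z), h(Z))` for any
measurable `h`. -/
theorem stmt9 {Ω α β γ δ ε : Type*} [MeasurableSpace Ω] [StandardBorelSpace Ω] [Nonempty Ω]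
    [MeasurableSpace α] [MeasurableSpace β] [MeasurableSpace γ]
    [MeasurableSpace δ] [MeasurableSpace ε]
    (μ : Measure Ω) [IsProbabilityMeasure μ]
    (X : Ω → α) (Y : Ω → β) (Z : Ω → γ) (g : γ → δ) (h : γ → ε)
    (hX : Measurable X) (hY : Measurable Y) (hZ : Measurable Z)
    (hg : Measurable g) (hh : Measurable h)
    (hXY : CondIndepFun (MeasurableSpace.comap Z inferInstance) hZ.comap_le X Y μ)
    (hYZ : CondIndepFun (MeasurableSpace.comap (fun ω => g (Z ω)) inferInstance)
      ((hg.comp hZ).comap_le) Y Z μ) :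
    CondIndepFun (MeasurableSpace.comap (fun ω => (g (Z ω), h (Z ω))) inferInstance)
      (((hg.comp hZ).prodMk (hh.comp hZ)).comap_le) X Y μ :=
  stmt9_general μ X Y Z g h hX hY hZ hg hh hXY hYZ
end

section
/- Suppose X ⊥ Y | Z. Then for any measurable function g of Z, the conditional independence X ⊥ Y | Z continues to hold given Z together with g(Z); moreover if X' is sampled from the conditional distribution of X given Z independently of (X, Y), then X' and X are exchangeable conditional on (Z, Y). -/
open MeasureTheory ProbabilityTheory

/-!
Adjoining `g(Z)` to `Z` does not change the σ-algebra generated by `Z`, so the first claim is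
the hypothesis itself. For exchangeability, the two conditional independences give, given `Z`,
`P(X' ∈ B, X ∈ A, Y ∈ T | Z) = P(X' ∈ B | Z) P(X ∈ A | Z) P(Y ∈ T | Z)`, and since `X'` and `X`
have the same conditional law given `Z` this is symmetric in `A` and `B`. Integrating over
`{Z ∈ S}` shows that `((Z, Y), (X, X'))` and `((Z, Y), (X', X))` agree on boxes, hence have the
same law, and a conditional distribution only depends on the joint law.
-/

lemma MeasurableSpace.comap_prodMk_comp_eq {Ω γ δ : Type*} {mγ : MeasurableSpace γ}
    {mδ : MeasurableSpace δ} (Z : Ω → γ) {g : γ → δ} (hg : Measurable g) :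
    (mγ.prod mδ).comap (fun ω ↦ (Z ω, g (Z ω))) = mγ.comap Z := by
  rw [MeasurableSpace.comap_prodMk, sup_eq_left, ← Function.comp_def g Z,
    ← MeasurableSpace.comap_comp]
  exact MeasurableSpace.comap_mono hg.comap_le

lemma MeasureTheory.Measure.ext_prod_prod {α β γ δ : Type*} {mα : MeasurableSpace α}
    {mβ : MeasurableSpace β} {mγ : MeasurableSpace γ} {mδ : MeasurableSpace δ}
    {μ ν : Measure ((α × β) × (γ × δ))} [IsFiniteMeasure μ]
    (h : ∀ {s : Set α} {t : Set β} {u : Set γ} {v : Set δ}, MeasurableSet s → MeasurableSet t →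
      MeasurableSet u → MeasurableSet v → μ ((s ×ˢ t) ×ˢ (u ×ˢ v)) = ν ((s ×ˢ t) ×ˢ (u ×ˢ v))) :
    μ = ν := by
  have h_univ : μ Set.univ = ν Set.univ := by
    simp_rw [← Set.univ_prod_univ]
    exact h .univ .univ .univ .univ
  have : IsFiniteMeasure ν := ⟨by simp [← h_univ]⟩
  refine ext_of_generate_finite _ (generateFrom_eq_prod generateFrom_prod generateFrom_prod
    (isCountablySpanning_measurableSet.prod isCountablySpanning_measurableSet)
    (isCountablySpanning_measurableSet.prod isCountablySpanning_measurableSet)).symm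
    (isPiSystem_prod.prod isPiSystem_prod) ?_ h_univ
  rintro - ⟨-, ⟨s, hs, t, ht, rfl⟩, -, ⟨u, hu, v, hv, rfl⟩, rfl⟩
  exact h hs ht hu hv

lemma ProbabilityTheory.condDistrib_eq_of_map_prodMk_eq {Ω Ω' α β : Type*} [MeasurableSpace Ω]
    [MeasurableSpace Ω'] [MeasurableSpace α] [StandardBorelSpace α] [Nonempty α]
    [MeasurableSpace β] {μ : Measure Ω} {ν : Measure Ω'} [IsFiniteMeasure μ] [IsFiniteMeasure ν]
    {X : Ω → α} {W : Ω → β} {X' : Ω' → α} {W' : Ω' → β}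
    (h : μ.map (fun ω ↦ (W ω, X ω)) = ν.map (fun ω ↦ (W' ω, X' ω))) :
    condDistrib X W μ = condDistrib X' W' ν := by
  rw [condDistrib_def, condDistrib_def]
  congr 1

lemma ProbabilityTheory.condExp_preimage_ae_eq_of_condDistrib_ae_eq {Ω α γ : Type*}
    [MeasurableSpace Ω] [MeasurableSpace α] [StandardBorelSpace α] [Nonempty α]
    [mγ : MeasurableSpace γ] {μ : Measure Ω} [IsFiniteMeasure μ] {X X' : Ω → α} {Z : Ω → γ}
    (hX : Measurable X) (hX' : Measurable X') (hZ : Measurable Z)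
    (h : ∀ᵐ z ∂(μ.map Z), condDistrib X Z μ z = condDistrib X' Z μ z)
    {A : Set α} (hA : MeasurableSet A) :
    μ⟦X ⁻¹' A | mγ.comap Z⟧ =ᵐ[μ] μ⟦X' ⁻¹' A | mγ.comap Z⟧ := by
  refine (condDistrib_ae_eq_condExp hZ hX hA).symm.trans
    (Filter.EventuallyEq.trans ?_ (condDistrib_ae_eq_condExp hZ hX' hA))
  filter_upwards [ae_of_ae_map hZ.aemeasurable h] with ω hω
  rw [hω]

lemma MeasureTheory.measure_inter_eq_of_condExp_ae_eq {Ω : Type*} {m mΩ : MeasurableSpace Ω}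
    {μ : Measure Ω} [IsFiniteMeasure μ] (hm : m ≤ mΩ) {s t₁ t₂ : Set Ω} (hs : MeasurableSet[m] s)
    (ht₁ : MeasurableSet t₁) (ht₂ : MeasurableSet t₂) (h : μ⟦t₁ | m⟧ =ᵐ[μ] μ⟦t₂ | m⟧) :
    μ (s ∩ t₁) = μ (s ∩ t₂) := by
  have h_real {t : Set Ω} (ht : MeasurableSet t) : μ.real (s ∩ t) = ∫ ω in s, (μ⟦t | m⟧) ω ∂μ := by
    rw [setIntegral_condExp hm ((integrable_const (1 : ℝ)).indicator ht) hs,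
      setIntegral_indicator ht, setIntegral_const, smul_eq_mul, mul_one, Set.inter_comm]
  rw [← measureReal_eq_measureReal_iff, h_real ht₁, h_real ht₂]
  exact integral_congr_ae (ae_restrict_of_ae h)

namespace ProbabilityTheory

variable {Ω α β : Type*} {m mΩ : MeasurableSpace Ω} [StandardBorelSpace Ω] {hm : m ≤ mΩ}
  {μ : Measure Ω} [IsFiniteMeasure μ] [MeasurableSpace α] [MeasurableSpace β]
  {X X' : Ω → α} {Y : Ω → β}

lemma condExp_preimage_inter_ae_eq_mul_mul (hX : Measurable X) (hX' : Measurable X')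
    (hY : Measurable Y) (hXY : CondIndepFun m hm X Y μ)
    (hX'XY : CondIndepFun m hm X' (fun ω ↦ (X ω, Y ω)) μ)
    {A B : Set α} {T : Set β} (hA : MeasurableSet A) (hB : MeasurableSet B)
    (hT : MeasurableSet T) :
    μ⟦X' ⁻¹' B ∩ (X ⁻¹' A ∩ Y ⁻¹' T) | m⟧
      =ᵐ[μ] μ⟦X' ⁻¹' B | m⟧ * (μ⟦X ⁻¹' A | m⟧ * μ⟦Y ⁻¹' T | m⟧) := by
  have hX'_XY := (condIndepFun_iff_condExp_inter_preimage_eq_mul hX' (hX.prodMk hY)).mp hX'XY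
    B (A ×ˢ T) hB (hA.prod hT)
  rw [Set.mk_preimage_prod] at hX'_XY
  refine hX'_XY.trans ?_
  filter_upwards [(condIndepFun_iff_condExp_inter_preimage_eq_mul hX hY).mp hXY A T hA hT]
    with ω hω
  rw [Pi.mul_apply, Pi.mul_apply, hω]

lemma measure_inter_preimage_swap_of_condIndepFun (hX : Measurable X) (hX' : Measurable X') (hY : Measurable Y)
    (hXY : CondIndepFun m hm X Y μ) (hX'XY : CondIndepFun m hm X' (fun ω ↦ (X ω, Y ω)) μ)
    (hlaw : ∀ A, MeasurableSet A → μ⟦X ⁻¹' A | m⟧ =ᵐ[μ] μ⟦X' ⁻¹' A | m⟧)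
    {s : Set Ω} (hs : MeasurableSet[m] s) {A B : Set α} {T : Set β} (hA : MeasurableSet A)
    (hB : MeasurableSet B) (hT : MeasurableSet T) :
    μ (s ∩ (X' ⁻¹' B ∩ (X ⁻¹' A ∩ Y ⁻¹' T))) = μ (s ∩ (X' ⁻¹' A ∩ (X ⁻¹' B ∩ Y ⁻¹' T))) := by
  refine measure_inter_eq_of_condExp_ae_eq hm hs ((hX' hB).inter ((hX hA).inter (hY hT)))
    ((hX' hA).inter ((hX hB).inter (hY hT))) ?_
  filter_upwards [condExp_preimage_inter_ae_eq_mul_mul hX hX' hY hXY hX'XY hA hB hT,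
    condExp_preimage_inter_ae_eq_mul_mul hX hX' hY hXY hX'XY hB hA hT, hlaw A hA, hlaw B hB]
    with ω hBA hAB hA hB
  simp only [hBA, hAB, Pi.mul_apply, ← hA, ← hB]
  ring

end ProbabilityTheory

theorem stmt10_general {Ω α β γ δ : Type*} [MeasurableSpace Ω] [StandardBorelSpace Ω]
    [MeasurableSpace α] [StandardBorelSpace α] [Nonempty α]
    [MeasurableSpace β] [MeasurableSpace γ] [MeasurableSpace δ]
    (μ : Measure Ω) [IsProbabilityMeasure μ]
    (X X' : Ω → α) (Y : Ω → β) (Z : Ω → γ) (g : γ → δ)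
    (hX : Measurable X) (hX' : Measurable X') (hY : Measurable Y) (hZ : Measurable Z)
    (hg : Measurable g)
    (hXY : CondIndepFun (MeasurableSpace.comap Z inferInstance) hZ.comap_le X Y μ)
    (hdist : ∀ᵐ z ∂(μ.map Z), condDistrib X Z μ z = condDistrib X' Z μ z)
    (hX'ind : CondIndepFun (MeasurableSpace.comap Z inferInstance) hZ.comap_le X'
      (fun ω => (X ω, Y ω)) μ) :
    CondIndepFun (MeasurableSpace.comap (fun ω => (Z ω, g (Z ω))) inferInstance)
        ((hZ.prodMk (hg.comp hZ)).comap_le) X Y μ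
      ∧ ∀ᵐ w ∂(μ.map fun ω => (Z ω, Y ω)),
          condDistrib (fun ω => (X ω, X' ω)) (fun ω => (Z ω, Y ω)) μ w
            = condDistrib (fun ω => (X' ω, X ω)) (fun ω => (Z ω, Y ω)) μ w := by
  refine ⟨by convert hXY using 2; exact MeasurableSpace.comap_prodMk_comp_eq Z hg, ?_⟩
  have hlaw := fun A (hA : MeasurableSet A) ↦
    condExp_preimage_ae_eq_of_condDistrib_ae_eq hX hX' hZ hdist hA
  have hmap : μ.map (fun ω ↦ ((Z ω, Y ω), (X ω, X' ω)))
      = μ.map (fun ω ↦ ((Z ω, Y ω), (X' ω, X ω))) := by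
    refine Measure.ext_prod_prod fun {S T A B} hS hT hA hB ↦ ?_
    rw [Measure.map_apply (by fun_prop) ((hS.prod hT).prod (hA.prod hB)),
      Measure.map_apply (by fun_prop) ((hS.prod hT).prod (hA.prod hB))]
    convert measure_inter_preimage_swap_of_condIndepFun hX hX' hY hXY hX'ind hlaw ⟨S, hS, rfl⟩ hA hB hT using 2
      <;> ext ω <;> simp only [Set.mem_preimage, Set.mem_prod, Set.mem_inter_iff] <;> tauto
  exact Filter.Eventually.of_forall fun w ↦ by rw [condDistrib_eq_of_map_prodMk_eq hmap]

/-- If `X ⊥ Y ∣ Z`, then `X ⊥ Y ∣ (Z, g(Z))`; moreover, if `X'` is sampled from the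
conditional distribution of `X` given `Z` independently of `(X,Y)` given `Z`, then
`(X, X')` and `(X', X)` have the same conditional distribution given `(Z, Y)`. -/
theorem stmt10 {Ω α β γ δ : Type*} [MeasurableSpace Ω] [StandardBorelSpace Ω] [Nonempty Ω]
    [MeasurableSpace α] [StandardBorelSpace α] [Nonempty α]
    [MeasurableSpace β] [MeasurableSpace γ] [MeasurableSpace δ]
    (μ : Measure Ω) [IsProbabilityMeasure μ]
    (X X' : Ω → α) (Y : Ω → β) (Z : Ω → γ) (g : γ → δ)
    (hX : Measurable X) (hX' : Measurable X') (hY : Measurable Y) (hZ : Measurable Z)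
    (hg : Measurable g)
    (hXY : CondIndepFun (MeasurableSpace.comap Z inferInstance) hZ.comap_le X Y μ)
    (hdist : ∀ᵐ z ∂(μ.map Z), condDistrib X Z μ z = condDistrib X' Z μ z)
    (hX'ind : CondIndepFun (MeasurableSpace.comap Z inferInstance) hZ.comap_le X'
      (fun ω => (X ω, Y ω)) μ) :
    CondIndepFun (MeasurableSpace.comap (fun ω => (Z ω, g (Z ω))) inferInstance)
        ((hZ.prodMk (hg.comp hZ)).comap_le) X Y μ
      ∧ ∀ᵐ w ∂(μ.map fun ω => (Z ω, Y ω)),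
          condDistrib (fun ω => (X ω, X' ω)) (fun ω => (Z ω, Y ω)) μ w
            = condDistrib (fun ω => (X' ω, X ω)) (fun ω => (Z ω, Y ω)) μ w :=
  stmt10_general μ X X' Y Z g hX hX' hY hZ hg hXY hdist hX'ind
end

section
/- Let (X, Y, Z) satisfy the null hypothesis X ⊥ Y | Z, and let X^{(1)}, ..., X^{(M)} be i.i.d. draws from the true conditional distribution of X given Z, drawn independently of (X, Y) given Z. Then for any measurable test statistic T, the p-value p = (1 + #{m : T(Y, X^{(m)}, Z) ≥ T(Y, X, Z)})/(M+1) satisfies P(p ≤ α) ≤ α for all α ∈ [0,1]. -/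
/-!
Conditionally on `W = (Y, Z)` the coordinates of `(X, X⁽¹⁾, …, X⁽ᴹ⁾)` are i.i.d., so the joint law
of this vector and `W` is invariant under permutations of the coordinates, and hence so is the law
of the vector of statistics `Tₘ = T(Y, X⁽ᵐ⁾, Z)`. For any `t ∈ ℝ^(M+1)`, at most `k` indices `i`
have upper rank `#{m | tᵢ ≤ tₘ} ≤ k`; by exchangeability all indices have the same probability of
this event, which is therefore at most `k / (M + 1)`. The p-value is the upper rank of the observed
statistic divided by `M + 1`, and `k = ⌊α (M + 1)⌋` gives the claim.
-/

open MeasureTheory ProbabilityTheory Finset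
open scoped ENNReal

section UpperRank

variable {ι α : Type*} [Fintype ι] [LinearOrder α]

def upperRank (t : ι → α) (i : ι) : ℕ := #{m | t i ≤ t m}

theorem card_upperRank_le_le (t : ι → α) (k : ℕ) : #{i | upperRank t i ≤ k} ≤ k := by
  obtain h | hne := ({i | upperRank t i ≤ k} : Finset ι).eq_empty_or_nonempty
  · simp [h]
  -- every index of the set lies above its lowest one
  obtain ⟨j, hj, hmin⟩ := exists_min_image _ t hne
  calc #{i | upperRank t i ≤ k} ≤ upperRank t j :=
        card_le_card fun i hi => mem_filter.2 ⟨mem_univ i, hmin i hi⟩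
    _ ≤ k := (mem_filter.1 hj).2

theorem upperRank_comp_perm (t : ι → α) (σ : Equiv.Perm ι) (i : ι) :
    upperRank (t ∘ σ) i = upperRank t (σ i) :=
  card_nbij' σ σ.symm (fun _ => by simp) (fun _ => by simp) (fun _ _ => by simp)
    (fun _ _ => by simp)

theorem upperRank_eq_one_add_card [DecidableEq ι] (t : ι → α) (i : ι) :
    upperRank t i = 1 + #{m | m ≠ i ∧ t i ≤ t m} := by
  rw [upperRank, add_comm, ← card_insert_of_notMem (a := i) (s := {m | m ≠ i ∧ t i ≤ t m})
    (by simp)]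
  congr 1
  ext m
  by_cases hm : m = i <;> simp [hm]

theorem measurable_upperRank (i : ι) : Measurable fun t : ι → ℝ => upperRank t i := by
  simp only [upperRank, card_filter]
  exact Finset.measurable_sum _ fun m _ =>
    Measurable.ite (measurableSet_le (measurable_pi_apply i) (measurable_pi_apply m))
      measurable_const measurable_const

end UpperRank

section Exchangeable

variable {Ω ι : Type*} [MeasurableSpace Ω] [Fintype ι]

open scoped Classical in
theorem sum_measure_le_of_forall_card_le (μ : Measure Ω) {E : ι → Set Ω}
    (hE : ∀ i, MeasurableSet (E i)) {k : ℕ} (hk : ∀ ω, #{i | ω ∈ E i} ≤ k) :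
    ∑ i, μ (E i) ≤ k * μ Set.univ := by
  calc ∑ i, μ (E i) = ∫⁻ ω, ∑ i, (E i).indicator 1 ω ∂μ := by
        rw [lintegral_finsetSum _ fun i _ => measurable_one.indicator (hE i)]
        simp_rw [lintegral_indicator_one (hE _)]
    _ = ∫⁻ ω, (#{i | ω ∈ E i} : ℝ≥0∞) ∂μ := by
        simp_rw [Set.indicator_apply, Pi.one_apply, sum_boole]
    _ ≤ ∫⁻ _, (k : ℝ≥0∞) ∂μ :=
        lintegral_mono fun ω => by convert Nat.mono_cast (α := ℝ≥0∞) (hk ω)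
    _ = k * μ Set.univ := lintegral_const _

variable (μ : Measure Ω) {R : Ω → ι → ℝ}

theorem measure_upperRank_le_eq [DecidableEq ι] (hR : Measurable R)
    (hexch : ∀ σ : Equiv.Perm ι, μ.map (fun ω => R ω ∘ σ) = μ.map R) (i j : ι) (k : ℕ) :
    μ {ω | upperRank (R ω) j ≤ k} = μ {ω | upperRank (R ω) i ≤ k} := by
  have hset : MeasurableSet {t : ι → ℝ | upperRank t i ≤ k} :=
    measurable_upperRank i measurableSet_Iic
  have hswap : {ω | upperRank (R ω) j ≤ k}
      = (fun ω => R ω ∘ Equiv.swap i j) ⁻¹' {t | upperRank t i ≤ k} := by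
    ext ω
    simp [upperRank_comp_perm]
  rw [hswap, ← Measure.map_apply (by fun_prop) hset, hexch, Measure.map_apply hR hset]
  rfl

theorem card_mul_measureReal_upperRank_le_le [IsProbabilityMeasure μ] (hR : Measurable R)
    (hexch : ∀ σ : Equiv.Perm ι, μ.map (fun ω => R ω ∘ σ) = μ.map R) (i : ι) (k : ℕ) :
    Fintype.card ι * μ.real {ω | upperRank (R ω) i ≤ k} ≤ k := by
  classical
  have hsum := sum_measure_le_of_forall_card_le μ (E := fun j => {ω | upperRank (R ω) j ≤ k})
    (fun j => (measurable_upperRank j).comp hR measurableSet_Iic)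
    fun ω => by simpa using card_upperRank_le_le (R ω) k
  simp_rw [measure_upperRank_le_eq μ hR hexch i, sum_const, card_univ, nsmul_eq_mul,
    measure_univ, mul_one] at hsum
  simpa [measureReal_def] using ENNReal.toReal_mono (by simp) hsum

end Exchangeable

theorem MeasureTheory.Measure.ext_pi_prod {ι 𝓧 δ : Type*} [Finite ι] [MeasurableSpace 𝓧]
    [MeasurableSpace δ] {ν ν' : Measure ((ι → 𝓧) × δ)} [IsFiniteMeasure ν]
    (h : ∀ A : ι → Set 𝓧, (∀ i, MeasurableSet (A i)) → ∀ t : Set δ, MeasurableSet t →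
      ν (Set.univ.pi A ×ˢ t) = ν' (Set.univ.pi A ×ˢ t)) :
    ν = ν' := by
  have huniv : ν Set.univ = ν' Set.univ := by
    simpa using h (fun _ => Set.univ) (fun _ => .univ) Set.univ .univ
  have : IsFiniteMeasure ν' := ⟨huniv ▸ measure_lt_top ν _⟩
  refine ext_of_generate_finite _
    (generateFrom_eq_prod generateFrom_pi MeasurableSpace.generateFrom_measurableSet
      (.pi fun _ => isCountablySpanning_measurableSet) isCountablySpanning_measurableSet).symm
    (isPiSystem_pi.prod MeasurableSpace.isPiSystem_measurableSet) ?_ huniv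
  rintro - ⟨-, ⟨A, hA, rfl⟩, t, ht, rfl⟩
  exact h A (fun i => hA i (Set.mem_univ i)) t ht

section CondIID

variable {Ω 𝓧 δ ι : Type*} [MeasurableSpace Ω] [StandardBorelSpace Ω]
  [MeasurableSpace 𝓧] [StandardBorelSpace 𝓧] [Nonempty 𝓧] [MeasurableSpace δ] [Fintype ι]
  {μ : Measure Ω} [IsProbabilityMeasure μ] {Xs : ι → Ω → 𝓧} {W : Ω → δ} {κ : Kernel δ 𝓧}

theorem measureReal_iInter_preimage_inter_eq_setIntegral_prod
    (hXs : ∀ i, Measurable (Xs i)) (hW : Measurable W)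
    (hci : iCondIndepFun (MeasurableSpace.comap W inferInstance) hW.comap_le Xs μ)
    (hκ : ∀ i, condDistrib (Xs i) W μ =ᵐ[μ.map W] κ)
    {A : ι → Set 𝓧} (hA : ∀ i, MeasurableSet (A i)) {t : Set δ} (ht : MeasurableSet t) :
    μ.real ((⋂ i, Xs i ⁻¹' A i) ∩ W ⁻¹' t) = ∫ ω in W ⁻¹' t, ∏ i, (κ (W ω)).real (A i) ∂μ := by
  have hκ' : ∀ᵐ ω ∂μ, ∀ i, condDistrib (Xs i) W μ (W ω) = κ (W ω) :=
    ae_all_iff.2 fun i => ae_of_ae_map hW.aemeasurable (hκ i)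
  have hcondExp : μ⟦⋂ i, Xs i ⁻¹' A i | MeasurableSpace.comap W inferInstance⟧
      =ᵐ[μ] fun ω => ∏ i, (κ (W ω)).real (A i) := by
    have hprod := (iCondIndepFun_iff_condExp_inter_preimage_eq_mul (hm' := hW.comap_le) _ _
      hXs).1 hci univ (sets := A) fun i _ => hA i
    have hmarg := ae_all_iff.2 fun i => condDistrib_ae_eq_condExp (μ := μ) hW (hXs i) (hA i)
    simp only [mem_univ, Set.iInter_true] at hprod
    filter_upwards [hprod, hmarg, hκ'] with ω hω hmargω hκω
    rw [hω, Finset.prod_apply]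
    exact prod_congr rfl fun i _ => by rw [← hmargω i, hκω i]
  have hE : MeasurableSet (⋂ i, Xs i ⁻¹' A i) := .iInter fun i => hXs i (hA i)
  rw [← integral_congr_ae (ae_restrict_of_ae hcondExp),
    setIntegral_condExp hW.comap_le ((integrable_const 1).indicator hE) ⟨t, ht, rfl⟩,
    setIntegral_indicator hE, setIntegral_const, smul_eq_mul, mul_one, Set.inter_comm]

theorem map_comp_perm_prod_eq_of_iCondIndepFun
    (hXs : ∀ i, Measurable (Xs i)) (hW : Measurable W)
    (hci : iCondIndepFun (MeasurableSpace.comap W inferInstance) hW.comap_le Xs μ)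
    (hκ : ∀ i, condDistrib (Xs i) W μ =ᵐ[μ.map W] κ) (σ : Equiv.Perm ι) :
    μ.map (fun ω => (fun i => Xs (σ i) ω, W ω)) = μ.map (fun ω => (fun i => Xs i ω, W ω)) := by
  have hbox : ∀ (Ys : ι → Ω → 𝓧) (A : ι → Set 𝓧) (t : Set δ),
      (fun ω => (fun i => Ys i ω, W ω)) ⁻¹' (Set.univ.pi A ×ˢ t) = (⋂ i, Ys i ⁻¹' A i) ∩ W ⁻¹' t :=
    fun Ys A t => by ext; simp
  refine Measure.ext_pi_prod fun A hA t ht => ?_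
  have hmeas : MeasurableSet (Set.univ.pi A ×ˢ t) := (MeasurableSet.univ_pi hA).prod ht
  rw [Measure.map_apply (by fun_prop) hmeas, Measure.map_apply (by fun_prop) hmeas, hbox, hbox,
    ← measureReal_eq_measureReal_iff,
    ← σ.symm.surjective.iInter_comp fun i => Xs (σ i) ⁻¹' A i]
  simp only [Equiv.apply_symm_apply]
  rw [measureReal_iInter_preimage_inter_eq_setIntegral_prod hXs hW hci hκ (fun i => hA _) ht,
    measureReal_iInter_preimage_inter_eq_setIntegral_prod hXs hW hci hκ hA ht]
  exact integral_congr_ae (.of_forall fun ω => σ.symm.prod_comp fun i => (κ (W ω)).real (A i))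

end CondIID

/-- `Xs 0` is the observed `X`; `Xs m` for `m ≠ 0` are the resamples. -/
theorem stmt11_general {Ω 𝓧 β γ : Type*} [MeasurableSpace Ω] [StandardBorelSpace Ω]
    [MeasurableSpace 𝓧] [StandardBorelSpace 𝓧] [Nonempty 𝓧]
    [MeasurableSpace β] [MeasurableSpace γ]
    (μ : Measure Ω) [IsProbabilityMeasure μ]
    (M : ℕ) (Xs : Fin (M + 1) → Ω → 𝓧) (Y : Ω → β) (Z : Ω → γ)
    (hXs : ∀ i, Measurable (Xs i)) (hY : Measurable Y) (hZ : Measurable Z)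
    (hci : iCondIndepFun (MeasurableSpace.comap (fun ω => (Y ω, Z ω)) inferInstance)
      ((hY.prodMk hZ).comap_le) Xs μ)
    (hid : ∀ i, ∀ᵐ w ∂(μ.map fun ω => (Y ω, Z ω)),
      condDistrib (Xs i) (fun ω => (Y ω, Z ω)) μ w
        = condDistrib (Xs 0) (fun ω => (Y ω, Z ω)) μ w)
    (T : β → 𝓧 → γ → ℝ) (hT : Measurable fun p : β × 𝓧 × γ => T p.1 p.2.1 p.2.2) :
    ∀ α : ℝ, α ∈ Set.Icc (0:ℝ) 1 →
      (μ {ω | ((1 : ℝ) + (Finset.univ.filter (fun m : Fin (M + 1) =>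
          m ≠ 0 ∧ T (Y ω) (Xs 0 ω) (Z ω) ≤ T (Y ω) (Xs m ω) (Z ω))).card) / (M + 1)
        ≤ α}).toReal ≤ α := by
  rintro α ⟨hα, -⟩
  set R : Ω → Fin (M + 1) → ℝ := fun ω m => T (Y ω) (Xs m ω) (Z ω)
  let F : (Fin (M + 1) → 𝓧) × β × γ → Fin (M + 1) → ℝ := fun p m => T p.2.1 (p.1 m) p.2.2
  have hF : Measurable F := measurable_pi_lambda _ fun m =>
    hT.comp (f := fun p : (Fin (M + 1) → 𝓧) × β × γ => (p.2.1, p.1 m, p.2.2)) (by fun_prop)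
  have hexch (σ : Equiv.Perm (Fin (M + 1))) : μ.map (fun ω => R ω ∘ σ) = μ.map R := by
    have hlaw := congrArg (Measure.map F)
      (map_comp_perm_prod_eq_of_iCondIndepFun hXs (hY.prodMk hZ) hci hid σ)
    rwa [Measure.map_map hF (by fun_prop), Measure.map_map hF (by fun_prop)] at hlaw
  -- `1 +` counts the observed index itself, so the p-value is the upper rank of `Xs 0` over `M + 1`
  have hpval : {ω | ((1 : ℝ) + (Finset.univ.filter (fun m : Fin (M + 1) =>
      m ≠ 0 ∧ T (Y ω) (Xs 0 ω) (Z ω) ≤ T (Y ω) (Xs m ω) (Z ω))).card) / (M + 1) ≤ α}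
      = {ω | upperRank (R ω) 0 ≤ ⌊α * (M + 1)⌋₊} := by
    ext ω
    rw [Set.mem_ofPred_eq, Set.mem_ofPred_eq, upperRank_eq_one_add_card,
      Nat.le_floor_iff (by positivity), div_le_iff₀ (by positivity)]
    push_cast
    rfl
  have hfloor : (⌊α * (M + 1)⌋₊ : ℝ) ≤ (M + 1) * α := by
    rw [mul_comm]; exact Nat.floor_le (by positivity)
  have hbound := card_mul_measureReal_upperRank_le_le μ (by fun_prop) hexch 0 ⌊α * (M + 1)⌋₊
  rw [Fintype.card_fin, Nat.cast_add, Nat.cast_one] at hbound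
  rw [hpval, ← measureReal_def]
  exact le_of_mul_le_mul_left (hbound.trans hfloor) (by positivity)

/-- Exact validity of the model-X CRT: under `X ⊥ Y ∣ Z`, if `X⁽¹⁾, …, X⁽ᴹ⁾` are,
conditionally on `(Y,Z)`, i.i.d. copies of `X` (all with the conditional law of `X`),
then the CRT p-value is valid. Here `Xs 0` is the observed `X` and `Xs m`, `m ≠ 0`,
are the resamples. -/
theorem stmt11 {Ω 𝓧 β γ : Type*} [MeasurableSpace Ω] [StandardBorelSpace Ω] [Nonempty Ω]
    [MeasurableSpace 𝓧] [StandardBorelSpace 𝓧] [Nonempty 𝓧]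
    [MeasurableSpace β] [MeasurableSpace γ]
    (μ : Measure Ω) [IsProbabilityMeasure μ]
    (M : ℕ) (Xs : Fin (M + 1) → Ω → 𝓧) (Y : Ω → β) (Z : Ω → γ)
    (hXs : ∀ i, Measurable (Xs i)) (hY : Measurable Y) (hZ : Measurable Z)
    (hnull : CondIndepFun (MeasurableSpace.comap Z inferInstance) hZ.comap_le (Xs 0) Y μ)
    (hci : iCondIndepFun (MeasurableSpace.comap (fun ω => (Y ω, Z ω)) inferInstance)
      ((hY.prodMk hZ).comap_le) Xs μ)
    (hid : ∀ i, ∀ᵐ w ∂(μ.map fun ω => (Y ω, Z ω)),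
      condDistrib (Xs i) (fun ω => (Y ω, Z ω)) μ w
        = condDistrib (Xs 0) (fun ω => (Y ω, Z ω)) μ w)
    (T : β → 𝓧 → γ → ℝ) (hT : Measurable fun p : β × 𝓧 × γ => T p.1 p.2.1 p.2.2) :
    ∀ α : ℝ, α ∈ Set.Icc (0:ℝ) 1 →
      (μ {ω | ((1 : ℝ) + (Finset.univ.filter (fun m : Fin (M + 1) =>
          m ≠ 0 ∧ T (Y ω) (Xs 0 ω) (Z ω) ≤ T (Y ω) (Xs m ω) (Z ω))).card) / (M + 1)
        ≤ α}).toReal ≤ α :=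
  stmt11_general μ M Xs Y Z hXs hY hZ hci hid T hT
end
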